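/- arXiv:1603.02937 — 3 statements merged into one kernel-verified Lean document; each statement's English description precedes it below -/
import Mathlib

section
/- Let Ω be a body in R^m and α < 0. The function V_Ω^{(α)} restricted to the interior of Ω is continuous. -/
open MeasureTheory Metric Set Filter
open scoped ENNReal NNReal Real
noncomputable section

/-- Open cone of vertex `x`, axis direction `v`, aperture angle `κ`, height `δ`. -/
def cone (m : ℕ) (x v : EuclideanSpace ℝ (Fin m)) (κ : ℝ) (δ : ℝ≥0∞) :
    Set (EuclideanSpace ℝ (Fin m)) :=
  {y | 0 < ‖y - x‖ ∧ ENNReal.ofReal ‖y - x‖ < δ ∧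
    (inner ℝ (y - x) v : ℝ) > ‖y - x‖ * Real.cos (κ / 2)}

/-- The (m-1)-dimensional measure of the unit sphere in `ℝ^m`. -/
def sphereArea (m : ℕ) : ℝ :=
  m * (volume (ball (0 : EuclideanSpace ℝ (Fin m)) 1)).toReal

/-- A body: the closure of a (nonempty) bounded open set. -/
def IsBody (m : ℕ) (Ω : Set (EuclideanSpace ℝ (Fin m))) : Prop :=
  ∃ O : Set (EuclideanSpace ℝ (Fin m)),
    IsOpen O ∧ Bornology.IsBounded O ∧ O.Nonempty ∧ Ω = closure O

/-- The renormalized Riesz potential of order `α ≤ 0`. -/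
def Vpot (m : ℕ) (Ω : Set (EuclideanSpace ℝ (Fin m))) (α : ℝ)
    (x : EuclideanSpace ℝ (Fin m)) : ℝ :=
  limUnder (nhdsWithin (0:ℝ) (Set.Ioi 0)) (fun ε =>
    (∫ ξ in Ω \ closedBall x ε, ‖x - ξ‖ ^ (α - m)) -
      (if α = 0 then sphereArea m * Real.log (1 / ε)
       else sphereArea m * ε ^ α / (-α)))

/-!
Fix `x₀` in the interior and `ε > 0` with `B(x₀, 2ε) ⊆ Ω`. For `x ∈ B(x₀, ε)` the renormalization
cancels exactly the integral of the kernel over the annuli `ε' < |x - ξ| ≤ ε`, which is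
`σ (ε'^α - ε^α) / (-α)` in polar coordinates; hence `V(x)` equals `∫_Ω max(|x - ξ|, ε)^(α-m) dξ` up
to a constant independent of `x`. The truncated kernel is bounded by `ε^(α-m)`, so this integral
over the bounded set `Ω` is continuous in `x` by dominated convergence.
-/

section TruncatedKernel

variable {E : Type*} [NormedAddCommGroup E] {p ε : ℝ}

lemma max_norm_sub_eq_left_of_notMem_closedBall {x ξ : E} (h : ξ ∉ closedBall x ε) :
    max ‖x - ξ‖ ε = ‖x - ξ‖ :=
  max_eq_left (le_of_lt (by simpa [dist_eq_norm'] using h))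

lemma max_norm_sub_eq_right_of_mem_closedBall {x ξ : E} (h : ξ ∈ closedBall x ε) :
    max ‖x - ξ‖ ε = ε :=
  max_eq_right (by simpa [dist_eq_norm'] using h)

lemma continuous_max_norm_sub_rpow (hε : 0 < ε) (x : E) :
    Continuous fun ξ : E => max ‖x - ξ‖ ε ^ p :=
  ((continuous_const.sub continuous_id).norm.max continuous_const).rpow_const
    fun _ => Or.inl (hε.trans_le (le_max_right _ _)).ne'

lemma norm_max_norm_sub_rpow_le (hp : p ≤ 0) (hε : 0 < ε) (x ξ : E) :
    ‖max ‖x - ξ‖ ε ^ p‖ ≤ ε ^ p := by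
  rw [Real.norm_of_nonneg (Real.rpow_nonneg (hε.le.trans (le_max_right _ _)) _)]
  exact Real.rpow_le_rpow_of_nonpos hε (le_max_right _ _) hp

variable [MeasurableSpace E] [OpensMeasurableSpace E] {μ : Measure E}

lemma integrableOn_max_norm_sub_rpow (hp : p ≤ 0) (hε : 0 < ε) (x : E) {s : Set E}
    (hs : μ s ≠ ∞) : IntegrableOn (fun ξ => max ‖x - ξ‖ ε ^ p) s μ :=
  Measure.integrableOn_of_bounded hs
    (continuous_max_norm_sub_rpow hε x).aestronglyMeasurable
    (ae_of_all _ (norm_max_norm_sub_rpow_le hp hε x))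

lemma integrableOn_norm_sub_rpow_diff_closedBall (hp : p ≤ 0) (hε : 0 < ε) (x : E)
    {s : Set E} (hs : MeasurableSet s) (hμs : μ s ≠ ∞) :
    IntegrableOn (fun ξ => ‖x - ξ‖ ^ p) (s \ closedBall x ε) μ :=
  (integrableOn_max_norm_sub_rpow hp hε x (measure_ne_top_of_subset sdiff_subset hμs)).congr_fun
    (fun _ hξ => by simp only [max_norm_sub_eq_left_of_notMem_closedBall hξ.2])
    (hs.diff measurableSet_closedBall)

lemma continuous_setIntegral_max_norm_sub_rpow (hp : p ≤ 0) (hε : 0 < ε) {s : Set E}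
    (hs : μ s ≠ ∞) : Continuous fun x => ∫ ξ in s, max ‖x - ξ‖ ε ^ p ∂μ :=
  continuous_of_dominated
    (fun x => (continuous_max_norm_sub_rpow hε x).aestronglyMeasurable)
    (fun x => ae_of_all _ (norm_max_norm_sub_rpow_le hp hε x))
    (integrableOn_const hs)
    (ae_of_all _ fun _ =>
      ((continuous_id.sub continuous_const).norm.max continuous_const).rpow_const
        fun _ => Or.inl (hε.trans_le (le_max_right _ _)).ne')

lemma setIntegral_max_norm_sub_rpow [ProperSpace E] [IsFiniteMeasureOnCompacts μ]
    (hp : p ≤ 0) (hε : 0 < ε) {x : E} {s : Set E} (hs : MeasurableSet s) (hμs : μ s ≠ ∞)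
    (hsub : closedBall x ε ⊆ s) :
    ∫ ξ in s, max ‖x - ξ‖ ε ^ p ∂μ =
      (∫ ξ in s \ closedBall x ε, ‖x - ξ‖ ^ p ∂μ) + ε ^ p * μ.real (closedBall x ε) := by
  have houter : ∫ ξ in s \ closedBall x ε, max ‖x - ξ‖ ε ^ p ∂μ =
      ∫ ξ in s \ closedBall x ε, ‖x - ξ‖ ^ p ∂μ :=
    setIntegral_congr_fun (hs.diff measurableSet_closedBall) fun _ hξ => by
      simp only [max_norm_sub_eq_left_of_notMem_closedBall hξ.2]
  have hinner : ∫ ξ in closedBall x ε, max ‖x - ξ‖ ε ^ p ∂μ =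
      ε ^ p * μ.real (closedBall x ε) := by
    rw [setIntegral_congr_fun (g := fun _ => ε ^ p) measurableSet_closedBall fun _ hξ => by
      simp only [max_norm_sub_eq_right_of_mem_closedBall hξ], setIntegral_const, smul_eq_mul,
      mul_comm]
  conv_lhs => rw [← sdiff_union_of_subset hsub]
  rw [setIntegral_union disjoint_sdiff_left measurableSet_closedBall
    (integrableOn_max_norm_sub_rpow hp hε x (measure_ne_top_of_subset sdiff_subset hμs))
    (integrableOn_max_norm_sub_rpow hp hε x measure_closedBall_lt_top.ne), houter, hinner]

end TruncatedKernel

section Annulus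

lemma integral_Ioi_pow_smul_indicator_Ioc_rpow {d : ℕ} (hd : 0 < d) {α a b : ℝ} (hα : α ≠ 0)
    (ha : 0 < a) (hab : a ≤ b) :
    ∫ y in Ioi (0 : ℝ), y ^ (d - 1) • (Ioc a b).indicator (fun r => r ^ (α - d)) y =
      (b ^ α - a ^ α) / α := by
  have hpow : ∀ y ∈ Icc a b, y ^ (d - 1) * y ^ (α - d) = y ^ (α - 1) := fun y hy => by
    rw [← Real.rpow_natCast, ← Real.rpow_add (ha.trans_le hy.1), Nat.cast_sub hd, Nat.cast_one]
    ring_nf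
  have hzero : (0 : ℝ) ∉ uIcc a b := by
    rw [uIcc_of_le hab]
    exact fun h => ha.not_ge h.1
  have hind : (fun y : ℝ => y ^ (d - 1) • (Ioc a b).indicator (fun r => r ^ (α - d)) y) =
      (Ioc a b).indicator fun y => y ^ (d - 1) * y ^ (α - d) := by
    ext y
    by_cases hy : y ∈ Ioc a b <;> simp [hy]
  rw [hind, setIntegral_indicator measurableSet_Ioc,
    inter_eq_right.mpr (Ioc_subset_Ioi_self.trans (Ioi_subset_Ioi ha.le)),
    ← intervalIntegral.integral_of_le hab,
    intervalIntegral.integral_congr (g := fun y => y ^ (α - 1)) fun y hy =>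
      hpow y (by rwa [uIcc_of_le hab] at hy), integral_rpow (Or.inr ⟨by simpa using hα, hzero⟩)]
  simp

variable {E : Type*} [NormedAddCommGroup E] [NormedSpace ℝ E] [FiniteDimensional ℝ E]
  [Nontrivial E] [MeasurableSpace E] [BorelSpace E] (μ : Measure E) [μ.IsAddHaarMeasure]

lemma setIntegral_norm_sub_rpow_annulus {α a b : ℝ} (hα : α ≠ 0) (x : E) (ha : 0 < a)
    (hab : a ≤ b) :
    ∫ ξ in closedBall x b \ closedBall x a, ‖x - ξ‖ ^ (α - Module.finrank ℝ E) ∂μ =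
      Module.finrank ℝ E * μ.real (ball 0 1) * ((b ^ α - a ^ α) / α) := by
  have hind : (closedBall x b \ closedBall x a).indicator
        (fun ξ => ‖x - ξ‖ ^ (α - Module.finrank ℝ E)) =
      fun ξ => (Ioc a b).indicator (fun r => r ^ (α - Module.finrank ℝ E)) ‖ξ - x‖ := by
    classical
    ext ξ
    simp only [indicator_apply, Set.mem_sdiff, mem_closedBall, mem_Ioc, dist_eq_norm,
      norm_sub_rev x ξ, not_le, and_comm]
  rw [← integral_indicator (measurableSet_closedBall.diff measurableSet_closedBall), hind,
    integral_sub_right_eq_self (fun η => (Ioc a b).indicator _ ‖η‖), integral_fun_norm_addHaar,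
    integral_Ioi_pow_smul_indicator_Ioc_rpow Module.finrank_pos hα ha hab, nsmul_eq_mul,
    smul_eq_mul, mul_assoc]

end Annulus

section Potential

variable {m : ℕ} {Ω : Set (EuclideanSpace ℝ (Fin m))} {α ε : ℝ} {x : EuclideanSpace ℝ (Fin m)}

lemma Vpot_eq_setIntegral_diff_closedBall (hm : 0 < m) (hΩ : MeasurableSet Ω)
    (hΩfin : volume Ω ≠ ∞) (hα : α < 0) (hε : 0 < ε) (hsub : closedBall x ε ⊆ Ω) :
    Vpot m Ω α x =
      (∫ ξ in Ω \ closedBall x ε, ‖x - ξ‖ ^ (α - m)) - sphereArea m * ε ^ α / (-α) := by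
  have : Nontrivial (EuclideanSpace ℝ (Fin m)) :=
    Module.nontrivial_of_finrank_pos (R := ℝ) (by rwa [finrank_euclideanSpace_fin])
  have hp : α - m ≤ 0 := sub_nonpos.mpr (hα.le.trans m.cast_nonneg)
  refine Tendsto.limUnder_eq (tendsto_const_nhds.congr' ?_)
  filter_upwards [Ioc_mem_nhdsGT hε] with ε' ⟨hε', hε'ε⟩
  have hannulus := setIntegral_norm_sub_rpow_annulus volume hα.ne x hε' hε'ε
  rw [finrank_euclideanSpace_fin] at hannulus
  rw [if_neg hα.ne, ← sdiff_union_sdiff_cancel hsub (closedBall_subset_closedBall hε'ε),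
    setIntegral_union (disjoint_sdiff_left.mono_right sdiff_subset)
      (measurableSet_closedBall.diff measurableSet_closedBall)
      (integrableOn_norm_sub_rpow_diff_closedBall hp hε x hΩ hΩfin)
      (integrableOn_norm_sub_rpow_diff_closedBall hp hε' x measurableSet_closedBall
        measure_closedBall_lt_top.ne),
    hannulus, sphereArea, measureReal_def]
  field_simp
  ring

lemma Vpot_eq_setIntegral_max_norm_sub_rpow_sub (hm : 0 < m) (hΩ : MeasurableSet Ω)
    (hΩfin : volume Ω ≠ ∞) (hα : α < 0) (hε : 0 < ε) (hsub : closedBall x ε ⊆ Ω) :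
    Vpot m Ω α x = (∫ ξ in Ω, max ‖x - ξ‖ ε ^ (α - m)) -
      (ε ^ (α - m) * volume.real (closedBall (0 : EuclideanSpace ℝ (Fin m)) ε) +
        sphereArea m * ε ^ α / (-α)) := by
  rw [Vpot_eq_setIntegral_diff_closedBall hm hΩ hΩfin hα hε hsub,
    setIntegral_max_norm_sub_rpow (sub_nonpos.mpr (hα.le.trans m.cast_nonneg)) hε hΩ hΩfin hsub,
    Measure.addHaar_real_closedBall_center]
  ring

end Potential

/-- For `α < 0`, the renormalized Riesz potential of a body is continuous
on the interior of the body. -/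
theorem stmt_3 (m : ℕ) (Ω : Set (EuclideanSpace ℝ (Fin m))) (hΩ : IsBody m Ω)
    (α : ℝ) (hα : α < 0) :
    ContinuousOn (Vpot m Ω α) (interior Ω) := by
  rcases Nat.eq_zero_or_pos m with rfl | hm
  · exact continuous_of_discreteTopology.continuousOn
  obtain ⟨O, -, hO, -, rfl⟩ := hΩ
  have hΩfin : volume (closure O) ≠ ∞ := hO.isCompact_closure.measure_lt_top.ne
  intro x₀ hx₀
  obtain ⟨r, hr, hball⟩ := Metric.isOpen_iff.mp isOpen_interior x₀ hx₀
  have hg := continuous_setIntegral_max_norm_sub_rpow (μ := volume)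
    (sub_nonpos.mpr (hα.le.trans m.cast_nonneg)) (half_pos hr) hΩfin
  refine ((hg.sub (continuous_const (y := ?C))).continuousAt.congr ?hlocal).continuousWithinAt
  case hlocal =>
    filter_upwards [ball_mem_nhds x₀ (half_pos hr)] with x hx
    refine (Vpot_eq_setIntegral_max_norm_sub_rpow_sub hm isClosed_closure.measurableSet hΩfin hα
      (half_pos hr) ?_).symm
    exact (closedBall_subset_ball' (by linarith [mem_ball.mp hx])).trans
      (hball.trans interior_subset)
end
end

section
/- Let α ≤ 0, 0 < κ ≤ π, 0 < δ ≤ ∞, and 0 < R < D. Let C_θ(Re_1) denote the open cone of vertex Re_1, axis direction obtained by rotating e_1 by angle θ in the (e_1,e_m)-plane, aperture angle κ and height δ. If δ ≤ D − R or δ ≥ sqrt(D² − R²), then the minimum over θ ∈ [0, (π−κ)/2] of ∫_{C_θ(Re_1) ∩ B_D(0)} |ξ|^{α−m} dξ is attained at θ = 0. -/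
/-!
Write `x = R e₁` for the common vertex and `v` for the rotated axis, and let `S` be the
reflection in the hyperplane orthogonal to `e₁ - v`, so that `S` swaps `e₁` and `v`. The map
`Φ ξ = x + S (ξ - x)` preserves volume, fixes `x` and carries `C₀` onto `C_θ`. Since
`‖x + w‖² = ‖x‖² + 2R⟪e₁, w⟫ + ‖w‖²` and `⟪e₁, S w⟫ = ⟪v, w⟫`, a point `ξ ∈ C₀ \ C_θ`, for which
`⟪ξ - x, v⟫ < ⟪ξ - x, e₁⟫`, satisfies `‖Φ ξ‖ ≤ ‖ξ‖`. Hence `Φ` maps `(C₀ \ C_θ) ∩ B_D` into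
`(C_θ \ C₀) ∩ B_D` and does not decrease the radially decreasing integrand `‖ξ‖^(α-m)`, so the
integral over `C₀ ∩ B_D` is at most the one over `C_θ ∩ B_D`. Integrability holds because
`‖ξ‖ > R cos θ > 0` on `C_θ`.
-/
open MeasureTheory Metric Set Filter
open scoped ENNReal NNReal Real
noncomputable section

/-- The cone `C_θ(R e₁; κ, δ)`: vertex `R e₁`, axis `e₁` rotated by `θ` in the
`(e₁, e_m)`-plane, aperture `κ`, height `δ`. -/
def coneTheta (m : ℕ) (hm : 2 ≤ m) (θ κ : ℝ) (δ : ℝ≥0∞) (R : ℝ) :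
    Set (EuclideanSpace ℝ (Fin m)) :=
  cone m (R • EuclideanSpace.single (⟨0, by omega⟩ : Fin m) (1:ℝ))
    (Real.cos θ • EuclideanSpace.single (⟨0, by omega⟩ : Fin m) (1:ℝ) +
      Real.sin θ • EuclideanSpace.single (⟨m - 1, by omega⟩ : Fin m) (1:ℝ)) κ δ

/-- The comparison function `E(R)` built from the cone integrals. -/
def Efun (m : ℕ) (hm : 2 ≤ m) (α κ : ℝ) (δ : ℝ≥0∞) (D R0 R : ℝ) : ℝ :=
  sInf ((fun θ =>
    (∫ ξ in coneTheta m hm θ κ δ R ∩ closedBall 0 D, ‖ξ‖ ^ (α - m)) -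
      ∫ ξ in closedBall (0 : EuclideanSpace ℝ (Fin m)) D \ closedBall 0 R0,
        ‖ξ‖ ^ (α - m)) '' Set.Icc 0 ((Real.pi - κ) / 2))

open scoped RealInnerProductSpace

theorem setIntegral_le_setIntegral_of_mapsTo_diff {X : Type*} [MeasurableSpace X] {μ : Measure X}
    {f : X → ℝ} {Φ : X → X} {s t : Set X} (hΦ : MeasurePreserving Φ μ μ)
    (hΦe : MeasurableEmbedding Φ) (hs : MeasurableSet s) (ht : MeasurableSet t)
    (hfs : IntegrableOn f s μ) (hft : IntegrableOn f t μ) (hmaps : MapsTo Φ (s \ t) (t \ s))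
    (hfΦ : ∀ x ∈ s \ t, f x ≤ f (Φ x)) (hf0 : ∀ x ∈ t \ s, 0 ≤ f x) :
    ∫ x in s, f x ∂μ ≤ ∫ x in t, f x ∂μ := by
  have hft' : IntegrableOn f (t \ s) μ := hft.mono_set sdiff_subset
  have hdiff : ∫ x in s \ t, f x ∂μ ≤ ∫ x in t \ s, f x ∂μ :=
    calc ∫ x in s \ t, f x ∂μ ≤ ∫ x in s \ t, f (Φ x) ∂μ :=
          setIntegral_mono_on (hfs.mono_set sdiff_subset)
            (((hΦ.integrableOn_comp_preimage hΦe).2 hft').mono_set hmaps) (hs.diff ht) hfΦ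
      _ = ∫ x in Φ '' (s \ t), f x ∂μ := (hΦ.setIntegral_image_emb hΦe f _).symm
      _ ≤ ∫ x in t \ s, f x ∂μ :=
          setIntegral_mono_set hft' ((ae_restrict_iff' (ht.diff hs)).2 (ae_of_all _ hf0))
            hmaps.image_subset.eventuallyLE
  have hsplit_s := integral_inter_add_sdiff ht hfs
  have hsplit_t := integral_inter_add_sdiff hs hft
  rw [inter_comm] at hsplit_t
  linarith

theorem norm_add_map_le_norm_add {F : Type*} [NormedAddCommGroup F] [InnerProductSpace ℝ F]
    {S : F ≃ₗᵢ[ℝ] F} {u v w : F} {R : ℝ} (hS : S v = u) (hR : 0 ≤ R) (hw : ⟪w, v⟫ ≤ ⟪w, u⟫) :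
    ‖R • u + S w‖ ≤ ‖R • u + w‖ := by
  have hinner : ⟪u, S w⟫ = ⟪v, w⟫ := by rw [← hS, S.inner_map_map]
  refine pow_le_pow_iff_left₀ (norm_nonneg _) (norm_nonneg _) two_ne_zero |>.1 ?_
  rw [norm_add_sq_real, norm_add_sq_real, S.norm_map, real_inner_smul_left,
    real_inner_smul_left, hinner]
  rw [real_inner_comm u w, real_inner_comm v w] at hw
  nlinarith

theorem norm_cos_smul_add_sin_smul {F : Type*} [NormedAddCommGroup F] [InnerProductSpace ℝ F]
    {u v : F} (hu : ‖u‖ = 1) (hv : ‖v‖ = 1) (huv : ⟪u, v⟫ = 0) (θ : ℝ) :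
    ‖Real.cos θ • u + Real.sin θ • v‖ = 1 := by
  refine (pow_left_inj₀ (norm_nonneg _) zero_le_one two_ne_zero).1 ?_
  rw [norm_add_sq_real, real_inner_smul_left, real_inner_smul_right, huv, norm_smul, norm_smul,
    hu, hv, Real.norm_eq_abs, Real.norm_eq_abs]
  simp only [mul_one, mul_zero, add_zero, one_pow, sq_abs]
  exact Real.cos_sq_add_sin_sq θ

section Cone

variable {m : ℕ} {κ : ℝ} {δ : ℝ≥0∞}

theorem isOpen_cone (x v : EuclideanSpace ℝ (Fin m)) : IsOpen (cone m x v κ δ) :=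
  show IsOpen ({y | 0 < ‖y - x‖} ∩ ({y | ENNReal.ofReal ‖y - x‖ < δ} ∩
      {y | ‖y - x‖ * Real.cos (κ / 2) < ⟪y - x, v⟫})) from
    (isOpen_lt (by fun_prop) (by fun_prop)).inter <|
    (isOpen_lt (ENNReal.continuous_ofReal.comp (by fun_prop)) continuous_const).inter
      (isOpen_lt (by fun_prop) (by fun_prop))

theorem add_map_sub_mem_cone_iff (S : EuclideanSpace ℝ (Fin m) ≃ₗᵢ[ℝ] EuclideanSpace ℝ (Fin m))
    {x w ξ : EuclideanSpace ℝ (Fin m)} :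
    x + S (ξ - x) ∈ cone m x (S w) κ δ ↔ ξ ∈ cone m x w κ δ := by
  simp only [cone, mem_ofPred_eq, add_sub_cancel_left, S.norm_map, S.inner_map_map]

theorem inner_sub_lt_inner_sub_of_mem_cone_of_notMem {x u v ξ : EuclideanSpace ℝ (Fin m)}
    (hu : ξ ∈ cone m x u κ δ) (hv : ξ ∉ cone m x v κ δ) : ⟪ξ - x, v⟫ < ⟪ξ - x, u⟫ :=
  (not_lt.1 fun h => hv ⟨hu.1, hu.2.1, h⟩).trans_lt hu.2.2

theorem mul_inner_lt_norm_of_mem_cone (hκ : 0 ≤ Real.cos (κ / 2)) {R : ℝ}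
    {u v ξ : EuclideanSpace ℝ (Fin m)} (hv : ‖v‖ = 1) (hξ : ξ ∈ cone m (R • u) v κ δ) :
    R * ⟪u, v⟫ < ‖ξ‖ := by
  have hpos : 0 < ⟪ξ - R • u, v⟫ := (mul_nonneg (norm_nonneg _) hκ).trans_lt hξ.2.2
  calc R * ⟪u, v⟫ < ⟪ξ, v⟫ := by
        rw [inner_sub_left, real_inner_smul_left] at hpos
        linarith
    _ ≤ ‖ξ‖ := by simpa [hv] using real_inner_le_norm ξ v

theorem integrableOn_norm_rpow_cone_inter_closedBall (hκ : 0 ≤ Real.cos (κ / 2)) {p R : ℝ}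
    (hp : p ≤ 0) {u v : EuclideanSpace ℝ (Fin m)} (hv : ‖v‖ = 1) (huv : 0 < R * ⟪u, v⟫) (D : ℝ) :
    IntegrableOn (fun ξ => ‖ξ‖ ^ p) (cone m (R • u) v κ δ ∩ closedBall 0 D) := by
  have hmeas : MeasurableSet (cone m (R • u) v κ δ ∩ closedBall 0 D) :=
    (isOpen_cone _ _).measurableSet.inter measurableSet_closedBall
  refine Measure.integrableOn_of_bounded (M := (R * ⟪u, v⟫) ^ p)
    ((measure_mono inter_subset_right).trans_lt measure_closedBall_lt_top).ne ?_ ?_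
  · exact (measurable_norm.pow_const p).aestronglyMeasurable
  · refine (ae_restrict_iff' hmeas).2 (ae_of_all _ fun ξ hξ => ?_)
    rw [Real.norm_of_nonneg (by positivity)]
    exact Real.rpow_le_rpow_of_nonpos huv (mul_inner_lt_norm_of_mem_cone hκ hv hξ.1).le hp

theorem measurePreserving_add_map_sub
    (S : EuclideanSpace ℝ (Fin m) ≃ₗᵢ[ℝ] EuclideanSpace ℝ (Fin m)) (x : EuclideanSpace ℝ (Fin m)) :
    MeasurePreserving (fun ξ => x + S (ξ - x)) :=
  ((measurePreserving_add_left volume x).comp S.measurePreserving).comp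
    (measurePreserving_sub_right volume x)

theorem measurableEmbedding_add_map_sub
    (S : EuclideanSpace ℝ (Fin m) ≃ₗᵢ[ℝ] EuclideanSpace ℝ (Fin m)) (x : EuclideanSpace ℝ (Fin m)) :
    MeasurableEmbedding fun ξ => x + S (ξ - x) :=
  (by fun_prop : Continuous fun ξ => x + S (ξ - x)).measurableEmbedding fun a b h => by
    simpa using h

theorem norm_add_map_sub_le_of_mem_cone_of_notMem
    {S : EuclideanSpace ℝ (Fin m) ≃ₗᵢ[ℝ] EuclideanSpace ℝ (Fin m)} {R : ℝ}
    {u v ξ : EuclideanSpace ℝ (Fin m)} (hS : S v = u) (hR : 0 ≤ R)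
    (hu : ξ ∈ cone m (R • u) u κ δ) (hv : ξ ∉ cone m (R • u) v κ δ) :
    ‖R • u + S (ξ - R • u)‖ ≤ ‖ξ‖ := by
  simpa using
    norm_add_map_le_norm_add hS hR (inner_sub_lt_inner_sub_of_mem_cone_of_notMem hu hv).le

theorem integral_norm_rpow_cone_inter_closedBall_le (hκ : 0 ≤ Real.cos (κ / 2)) {p R : ℝ}
    (hp : p ≤ 0) (hR : 0 < R) {u v : EuclideanSpace ℝ (Fin m)} (hu : ‖u‖ = 1) (hv : ‖v‖ = 1)
    (huv : 0 < ⟪u, v⟫) (D : ℝ) :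
    ∫ ξ in cone m (R • u) u κ δ ∩ closedBall 0 D, ‖ξ‖ ^ p ≤
      ∫ ξ in cone m (R • u) v κ δ ∩ closedBall 0 D, ‖ξ‖ ^ p := by
  set S := (ℝ ∙ (u - v))ᗮ.reflection
  have hSu : S u = v := Submodule.reflection_sub (hu.trans hv.symm)
  have hSv : S v = u := by rw [← hSu, Submodule.reflection_reflection]
  have hmaps {ξ} (hξ : ξ ∈ (cone m (R • u) u κ δ ∩ closedBall 0 D) \
      (cone m (R • u) v κ δ ∩ closedBall 0 D)) :
      R • u + S (ξ - R • u) ∈ cone m (R • u) v κ δ ∧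
        R • u + S (ξ - R • u) ∉ cone m (R • u) u κ δ ∧ ‖R • u + S (ξ - R • u)‖ ≤ ‖ξ‖ := by
    obtain ⟨⟨hξu, hξD⟩, hξv⟩ := hξ
    have hξv' : ξ ∉ cone m (R • u) v κ δ := fun h => hξv ⟨h, hξD⟩
    exact ⟨hSu ▸ (add_map_sub_mem_cone_iff S).2 hξu,
      fun h => hξv' ((add_map_sub_mem_cone_iff S).1 (hSv ▸ h)),
      norm_add_map_sub_le_of_mem_cone_of_notMem hSv hR.le hξu hξv'⟩
  refine setIntegral_le_setIntegral_of_mapsTo_diff (measurePreserving_add_map_sub S (R • u))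
    (measurableEmbedding_add_map_sub S (R • u))
    ((isOpen_cone _ _).measurableSet.inter measurableSet_closedBall)
    ((isOpen_cone _ _).measurableSet.inter measurableSet_closedBall)
    (integrableOn_norm_rpow_cone_inter_closedBall hκ hp hu (by simpa [hu] using hR) D)
    (integrableOn_norm_rpow_cone_inter_closedBall hκ hp hv (mul_pos hR huv) D)
    (fun ξ hξ => ?_) (fun ξ hξ => ?_) fun _ _ => by positivity
  · obtain ⟨hΦv, hΦu, hle⟩ := hmaps hξ
    exact ⟨⟨hΦv, mem_closedBall_zero_iff.2 (hle.trans (mem_closedBall_zero_iff.1 hξ.1.2))⟩,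
      fun h => hΦu h.1⟩
  · obtain ⟨hΦv, -, hle⟩ := hmaps hξ
    exact Real.rpow_le_rpow_of_nonpos
      ((mul_pos hR huv).trans (mul_inner_lt_norm_of_mem_cone hκ hv hΦv)) hle hp

end Cone

theorem stmt_9_general (m : ℕ) (hm : 2 ≤ m) (α : ℝ) (hα : α ≤ 0)
    (κ : ℝ) (hκ0 : 0 < κ) (hκπ : κ ≤ Real.pi) (δ : ℝ≥0∞)
    (R D : ℝ) (hR : 0 < R) :
    ∀ θ ∈ Set.Icc (0:ℝ) ((Real.pi - κ) / 2),
      (∫ ξ in coneTheta m hm 0 κ δ R ∩ closedBall 0 D, ‖ξ‖ ^ (α - m)) ≤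
        ∫ ξ in coneTheta m hm θ κ δ R ∩ closedBall 0 D, ‖ξ‖ ^ (α - m) := by
  rintro θ ⟨hθ0, hθκ⟩
  set e₁ := EuclideanSpace.single (⟨0, by omega⟩ : Fin m) (1 : ℝ)
  set eₘ := EuclideanSpace.single (⟨m - 1, by omega⟩ : Fin m) (1 : ℝ)
  have he₁ : ‖e₁‖ = 1 := by simp [e₁]
  have heₘ : ‖eₘ‖ = 1 := by simp [eₘ]
  have he₁ₘ : ⟪e₁, eₘ⟫ = 0 := by
    simp [e₁, eₘ, EuclideanSpace.inner_single_left]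
    omega
  have hcos : 0 < Real.cos θ := Real.cos_pos_of_mem_Ioo ⟨by linarith [Real.pi_pos], by linarith⟩
  have hcone₀ : coneTheta m hm 0 κ δ R = cone m (R • e₁) e₁ κ δ := by simp [coneTheta, e₁]
  rw [hcone₀]
  refine integral_norm_rpow_cone_inter_closedBall_le
    (Real.cos_nonneg_of_mem_Icc ⟨by linarith, by linarith⟩)
    (sub_nonpos.2 (hα.trans m.cast_nonneg)) hR he₁
    (norm_cos_smul_add_sin_smul he₁ heₘ he₁ₘ θ) ?_ D
  rwa [inner_add_right, real_inner_smul_right, real_inner_smul_right, he₁ₘ,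
    real_inner_self_eq_norm_sq, he₁, one_pow, mul_one, mul_zero, add_zero]

/-- Under the height condition `δ ≤ D - R` or `δ ≥ √(D²-R²)`, the minimum over
`θ ∈ [0, (π-κ)/2]` of the cone integral is attained at `θ = 0`. -/
theorem stmt_9 (m : ℕ) (hm : 2 ≤ m) (α : ℝ) (hα : α ≤ 0)
    (κ : ℝ) (hκ0 : 0 < κ) (hκπ : κ ≤ Real.pi) (δ : ℝ≥0∞) (hδ : 0 < δ)
    (R D : ℝ) (hR : 0 < R) (hRD : R < D)
    (hδcase : δ ≤ ENNReal.ofReal (D - R) ∨ ENNReal.ofReal (Real.sqrt (D^2 - R^2)) ≤ δ) :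
    ∀ θ ∈ Set.Icc (0:ℝ) ((Real.pi - κ) / 2),
      (∫ ξ in coneTheta m hm 0 κ δ R ∩ closedBall 0 D, ‖ξ‖ ^ (α - m)) ≤
        ∫ ξ in coneTheta m hm θ κ δ R ∩ closedBall 0 D, ‖ξ‖ ^ (α - m) :=
  stmt_9_general m hm α hα κ hκ0 hκπ δ R D hR
end
end

section
/- Let m ≥ 2, D = diam Ω > 0 and 0 < R_0 < D, and define f(R) = sin^{m−1}(φ(R))/(m−1) + (R/D)∫_{φ(R)}^{π} sin^{m−2}θ dθ − (R/R_0)∫_0^{π} sin^{m−2}θ dθ, where φ(R) = arccos(R/D), for 0 ≤ R ≤ D. Then f'(R) < 0 and f''(R) > 0 on (0, D), i.e., f is strictly decreasing and strictly convex. -/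
/-! Write `φ(R) = arccos (R / D)` and `I(a) = ∫_a^π sin^{m-2}`. Differentiating the first two
terms of `f`, the contributions of `φ'` cancel because `cos φ = R / D`, so
`f'(R) = I(φ(R)) / D - I(0) / R₀`. As `R` increases, `φ` decreases and `I(φ)` strictly increases,
so `f'` is strictly increasing and `f` strictly convex; and `I(φ) ≤ I(0)` with `R₀ < D` gives
`f' < 0`. -/

open MeasureTheory Metric Set Filter
open scoped ENNReal NNReal Real
noncomputable section

open Real

lemma integral_sin_pow_pos_of_lt (k : ℕ) {a b : ℝ} (ha : 0 ≤ a) (hab : a < b) (hb : b ≤ π) :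
    0 < ∫ θ in a..b, sin θ ^ k :=
  intervalIntegral.intervalIntegral_pos_of_pos_on
    ((continuous_sin.pow k).intervalIntegrable a b)
    (fun _ hθ => pow_pos (sin_pos_of_pos_of_lt_pi (ha.trans_lt hθ.1) (hθ.2.trans_le hb)) k) hab

lemma strictAntiOn_integral_sin_pow_to_pi (k : ℕ) :
    StrictAntiOn (fun a => ∫ θ in a..π, sin θ ^ k) (Icc 0 π) := by
  intro a ha b hb hab
  have hint (u v : ℝ) : IntervalIntegrable (fun θ => sin θ ^ k) volume u v :=
    (continuous_sin.pow k).intervalIntegrable u v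
  have hsplit := intervalIntegral.integral_add_adjacent_intervals (hint a b) (hint b π)
  have hpos := integral_sin_pow_pos_of_lt k ha.1 hab hb.2
  dsimp only
  linarith

lemma strictMonoOn_integral_sin_pow_arccos_to_pi (k : ℕ) :
    StrictMonoOn (fun x => ∫ θ in arccos x..π, sin θ ^ k) (Icc (-1) 1) := fun _ hx _ hy hxy =>
  strictAntiOn_integral_sin_pow_to_pi k ⟨arccos_nonneg _, arccos_le_pi _⟩
    ⟨arccos_nonneg _, arccos_le_pi _⟩ (strictAntiOn_arccos hx hy hxy)

lemma hasDerivAt_sin_arccos_pow_add_mul_integral (k : ℕ) {x : ℝ} (hx : x ∈ Ioo (-1) 1) :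
    HasDerivAt (fun x => sin (arccos x) ^ (k + 1) / (k + 1) + x * ∫ θ in arccos x..π, sin θ ^ k)
      (∫ θ in arccos x..π, sin θ ^ k) x := by
  have harccos := hasDerivAt_arccos hx.1.ne' hx.2.ne
  have hsin := ((hasDerivAt_sin (arccos x)).comp x harccos).pow (k + 1)
  have hintegral := (intervalIntegral.integral_hasDerivAt_left
    ((continuous_sin.pow k).intervalIntegrable _ π)
    ((continuous_sin.pow k).stronglyMeasurableAtFilter _ _)
    (continuous_sin.pow k).continuousAt).comp x harccos
  refine ((hsin.div_const ((k : ℝ) + 1)).add ((hasDerivAt_id x).mul hintegral)).congr_deriv ?_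
  simp only [cos_arccos hx.1.le hx.2.le, Function.comp_apply, Pi.pow_apply, id,
    Nat.add_sub_cancel]
  push_cast
  field_simp
  ring

lemma strictAntiOn_and_strictConvexOn_of_hasDerivAt {s : Set ℝ} (hs : Convex ℝ s)
    (hs_open : IsOpen s) {f f' : ℝ → ℝ} (hf : ∀ x ∈ s, HasDerivAt f (f' x) x)
    (hf'_neg : ∀ x ∈ s, f' x < 0) (hf'_mono : StrictMonoOn f' s) :
    StrictAntiOn f s ∧ StrictConvexOn ℝ s f := by
  have hcont : ContinuousOn f s := fun x hx => (hf x hx).continuousAt.continuousWithinAt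
  rw [← hs_open.interior_eq] at hf hf'_neg hf'_mono
  refine ⟨strictAntiOn_of_hasDerivWithinAt_neg hs hcont
    (fun x hx => (hf x hx).hasDerivWithinAt) hf'_neg, ?_⟩
  refine StrictMonoOn.strictConvexOn_of_deriv hs hcont fun x hx y hy hxy => ?_
  rw [(hf x hx).deriv, (hf y hy).deriv]
  exact hf'_mono hx hy hxy

/-- The auxiliary function
`f(R) = sin^{m-1}(φ(R))/(m-1) + (R/D)∫_{φ(R)}^π sin^{m-2}θ dθ − (R/R₀)∫_0^π sin^{m-2}θ dθ`,
`φ(R) = arccos(R/D)`, has `f' < 0` and `f'' > 0` on `(0, D)`, i.e. it is strictly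
decreasing and strictly convex there. -/
theorem stmt_18 (m : ℕ) (hm : 2 ≤ m) (D R0 : ℝ) (hD : 0 < D) (hR0 : 0 < R0)
    (hR0D : R0 < D)
    (f : ℝ → ℝ)
    (hf : ∀ R : ℝ, f R =
      Real.sin (Real.arccos (R / D)) ^ (m - 1) / ((m:ℝ) - 1) +
        (R / D) * (∫ θ in Real.arccos (R / D)..Real.pi, Real.sin θ ^ (m - 2)) -
        (R / R0) * ∫ θ in (0:ℝ)..Real.pi, Real.sin θ ^ (m - 2)) :
    StrictAntiOn f (Set.Ioo 0 D) ∧ StrictConvexOn ℝ (Set.Ioo 0 D) f := by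
  obtain ⟨k, rfl⟩ : ∃ k, m = k + 2 := ⟨m - 2, by omega⟩
  set I : ℝ → ℝ := fun x => ∫ θ in arccos x..π, sin θ ^ k
  set f' : ℝ → ℝ := fun R => I (R / D) / D - I 1 / R0
  have hunit : ∀ R ∈ Ioo 0 D, R / D ∈ Ioo (-1) 1 := fun R hR =>
    ⟨by linarith [div_pos hR.1 hD], (div_lt_one hD).2 hR.2⟩
  have hf_eq : f = fun R => (sin (arccos (R / D)) ^ (k + 1) / (k + 1) + R / D * I (R / D))
      - R / R0 * I 1 := by
    ext R
    simp only [hf, I, arccos_one, Nat.add_one_sub_one, add_tsub_cancel_right, Nat.cast_add,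
      Nat.cast_ofNat]
    ring
  have hderiv : ∀ R ∈ Ioo 0 D, HasDerivAt f (f' R) R := by
    intro R hR
    have hF := (hasDerivAt_sin_arccos_pow_add_mul_integral k (hunit R hR)).comp R
      ((hasDerivAt_id R).div_const D)
    rw [hf_eq]
    exact (hF.sub (((hasDerivAt_id R).div_const R0).mul_const (I 1))).congr_deriv (by
      simp only [f', I]
      ring)
  have hf'_mono : StrictMonoOn f' (Ioo 0 D) := fun a ha b hb hab => by
    have := strictMonoOn_integral_sin_pow_arccos_to_pi k (Ioo_subset_Icc_self (hunit a ha))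
      (Ioo_subset_Icc_self (hunit b hb)) (div_lt_div_of_pos_right hab hD)
    simp only [f']
    gcongr
  have hf'_neg : ∀ R ∈ Ioo 0 D, f' R < 0 := fun R hR => by
    have hI1 : 0 < I 1 := by simpa [I, arccos_one] using integral_sin_pow_pos (n := k)
    have hle : I (R / D) ≤ I 1 := (strictMonoOn_integral_sin_pow_arccos_to_pi k).monotoneOn
      (Ioo_subset_Icc_self (hunit R hR)) ⟨by norm_num, le_rfl⟩ (hunit R hR).2.le
    refine sub_neg.2 ?_
    calc I (R / D) / D ≤ I 1 / D := by gcongr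
      _ < I 1 / R0 := by gcongr
  exact strictAntiOn_and_strictConvexOn_of_hasDerivAt (convex_Ioo 0 D) isOpen_Ioo hderiv
    hf'_neg hf'_mono
end
end
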